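/- arXiv:1812.07934 — 4 statements merged into one kernel-verified Lean document; each statement's English description precedes it below -/
import Mathlib

section
/- Let F ∈ ℂ^{d×d} be Hermitian positive definite. Then the maximum over Hermitian positive definite Q ∈ ℂ^{d×d} of f(Q) = −tr(Q F) + log det Q + d equals log det(F⁻¹), and is attained at Q = F⁻¹. -/
open Matrix ComplexOrder

/-!
For a positive definite `A` with eigenvalues `λᵢ`, summing `log λᵢ ≤ λᵢ - 1` gives
`d + log det A ≤ tr A`. Writing `F = B⋆B`, the product `QF` has the trace and determinant of the
positive definite matrix `BQB⋆`, hence `d + log det Q + log det F ≤ tr (QF)`; this is the claimed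
bound because `log det F⁻¹ = -log det F`. At `Q = F⁻¹` the trace term is exactly `d`.
-/

namespace Matrix

variable {𝕜 n : Type*} [RCLike 𝕜] [Fintype n] [DecidableEq n]

lemma IsHermitian.ofReal_re_det {A : Matrix n n 𝕜} (hA : A.IsHermitian) :
    ((RCLike.re A.det : ℝ) : 𝕜) = A.det := by
  rw [hA.det_eq_prod_eigenvalues, ← RCLike.ofReal_prod, RCLike.ofReal_re]

lemma IsHermitian.re_det_mul {A B : Matrix n n 𝕜} (hA : A.IsHermitian) (hB : B.IsHermitian) :
    RCLike.re (A * B).det = RCLike.re A.det * RCLike.re B.det := by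
  rw [det_mul, ← hA.ofReal_re_det, ← hB.ofReal_re_det, ← RCLike.ofReal_mul, RCLike.ofReal_re,
    RCLike.ofReal_re, RCLike.ofReal_re]

lemma IsHermitian.re_det_inv {A : Matrix n n 𝕜} (hA : A.IsHermitian) :
    RCLike.re A⁻¹.det = (RCLike.re A.det)⁻¹ := by
  rw [det_nonsing_inv, Ring.inverse_eq_inv', ← hA.ofReal_re_det, ← RCLike.ofReal_inv,
    RCLike.ofReal_re, RCLike.ofReal_re]

lemma PosDef.re_det_pos {A : Matrix n n 𝕜} (hA : A.PosDef) : 0 < RCLike.re A.det :=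
  (RCLike.pos_iff.mp hA.det_pos).1

lemma PosDef.card_add_log_re_det_le_re_trace {A : Matrix n n 𝕜} (hA : A.PosDef) :
    Fintype.card n + Real.log (RCLike.re A.det) ≤ RCLike.re A.trace := by
  rw [hA.1.det_eq_prod_eigenvalues, hA.1.trace_eq_sum_eigenvalues, ← RCLike.ofReal_prod,
    ← RCLike.ofReal_sum, RCLike.ofReal_re, RCLike.ofReal_re,
    Real.log_prod fun i _ ↦ (hA.eigenvalues_pos i).ne']
  have hlog : ∀ i, Real.log (hA.1.eigenvalues i) ≤ hA.1.eigenvalues i - 1 :=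
    fun i ↦ Real.log_le_sub_one_of_pos (hA.eigenvalues_pos i)
  have hsum := Finset.sum_le_sum fun i (_ : i ∈ Finset.univ) ↦ hlog i
  rw [Finset.sum_sub_distrib, Finset.sum_const, Finset.card_univ, nsmul_one] at hsum
  linarith

open scoped MatrixOrder in
lemma PosDef.card_add_log_re_det_mul_le_re_trace_mul {Q F : Matrix n n 𝕜} (hQ : Q.PosDef)
    (hF : F.PosDef) :
    Fintype.card n + Real.log (RCLike.re (Q * F).det) ≤ RCLike.re (Q * F).trace := by
  obtain ⟨B, rfl⟩ := CStarAlgebra.nonneg_iff_eq_star_mul_self.mp hF.posSemidef.nonneg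
  have hB : IsUnit B := by
    have hdet := hF.det_pos.ne'
    rw [det_mul] at hdet
    exact (isUnit_iff_isUnit_det B).mpr (right_ne_zero_of_mul hdet).isUnit
  have hA : (B * Q * star B).PosDef := hB.posDef_star_right_conjugate_iff.mpr hQ
  have htrace : (B * Q * star B).trace = (Q * (star B * B)).trace := by
    rw [trace_mul_cycle, ← mul_assoc, trace_mul_comm, mul_assoc]
  have hdet : (B * Q * star B).det = (Q * (star B * B)).det := by
    simp only [det_mul]; ring
  simpa only [htrace, hdet] using hA.card_add_log_re_det_le_re_trace

end Matrix

theorem stmt_10 {d : ℕ} (F : Matrix (Fin d) (Fin d) ℂ)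
    (hF : F.PosDef) :
    (∀ Q : Matrix (Fin d) (Fin d) ℂ, Q.PosDef →
      -((Q * F).trace.re) + Real.log Q.det.re + d ≤ Real.log (F⁻¹).det.re) ∧
    -(((F⁻¹) * F).trace.re) + Real.log (F⁻¹).det.re + d = Real.log (F⁻¹).det.re := by
  have hlog_det_inv : Real.log (F⁻¹).det.re = -Real.log F.det.re := by
    rw [← RCLike.re_to_complex, hF.1.re_det_inv, Real.log_inv, RCLike.re_to_complex]
  refine ⟨fun Q hQ ↦ ?_, ?_⟩
  · have key := hQ.card_add_log_re_det_mul_le_re_trace_mul hF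
    rw [hQ.1.re_det_mul hF.1, Real.log_mul hQ.re_det_pos.ne' hF.re_det_pos.ne',
      Fintype.card_fin] at key
    simp only [RCLike.re_to_complex] at key
    linarith
  · rw [nonsing_inv_mul F ((isUnit_iff_isUnit_det F).mp hF.isUnit), trace_one]
    simp
end

section
/- For a Hermitian positive definite matrix Q and Hermitian positive definite F with F ⪯ I (so det F ≤ 1), the value −tr(Q F) + log det Q + d ≤ log det(F⁻¹) for all Hermitian positive definite Q. -/
/-!
Write `F = R²` with `R = √F`. The Hermitian matrix `S = R Q R` is positive definite, with
`tr S = tr (Q F)` and `det S = det Q · det F`. Summing `log λ ≤ λ - 1` over the eigenvalues `λ`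
of `S` gives `log det S + d ≤ tr S`, which rearranges to the claim since
`log det F⁻¹ = -log det F`.
-/

open Matrix ComplexOrder

namespace Matrix.PosDef

variable {n 𝕜 : Type*} [Fintype n] [DecidableEq n] [RCLike 𝕜]

theorem ofReal_re_det {A : Matrix n n 𝕜} (hA : A.PosDef) :
    ((RCLike.re A.det : ℝ) : 𝕜) = A.det := by
  obtain ⟨x, -, hx⟩ := RCLike.pos_iff_exists_ofReal.mp hA.det_pos
  rw [← hx, RCLike.ofReal_re]

theorem re_det_pos_s11 {A : Matrix n n 𝕜} (hA : A.PosDef) : 0 < RCLike.re A.det :=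
  (RCLike.pos_iff.mp hA.det_pos).1

theorem re_det_inv {A : Matrix n n 𝕜} (hA : A.PosDef) :
    RCLike.re A⁻¹.det = (RCLike.re A.det)⁻¹ := by
  rw [det_nonsing_inv, Ring.inverse_eq_inv', ← hA.ofReal_re_det, ← RCLike.ofReal_inv,
    RCLike.ofReal_re, RCLike.ofReal_re]

theorem log_det_add_card_le_re_trace {S : Matrix n n 𝕜} (hS : S.PosDef) :
    Real.log (RCLike.re S.det) + Fintype.card n ≤ RCLike.re S.trace := by
  set μ := hS.1.eigenvalues
  rw [hS.1.det_eq_prod_eigenvalues, hS.1.trace_eq_sum_eigenvalues, ← RCLike.ofReal_prod,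
    ← RCLike.ofReal_sum, RCLike.ofReal_re, RCLike.ofReal_re,
    Real.log_prod fun i _ => (hS.eigenvalues_pos i).ne']
  calc ∑ i, Real.log (μ i) + Fintype.card n
      ≤ ∑ i, (μ i - 1) + Fintype.card n := by
        gcongr with i
        exact Real.log_le_sub_one_of_pos (hS.eigenvalues_pos i)
    _ = ∑ i, μ i := by simp [Finset.sum_sub_distrib]

open scoped MatrixOrder in
theorem log_det_add_log_det_add_card_le_re_trace_mul {A B : Matrix n n 𝕜} (hA : A.PosDef)
    (hB : B.PosDef) :
    Real.log (RCLike.re A.det) + Real.log (RCLike.re B.det) + Fintype.card n ≤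
      RCLike.re (A * B).trace := by
  set R := CFC.sqrt B
  have hRR : R * R = B := CFC.sqrt_mul_sqrt_self B hB.posSemidef.nonneg
  have hRH : Rᴴ = R := (CFC.sqrt_nonneg B).posSemidef.1
  have hdet : (R * A * R).det = A.det * B.det := by
    rw [det_mul, det_mul, ← hRR, det_mul]; ring
  have hS : (R * A * R).PosDef := by
    have hS := hA.posSemidef.mul_mul_conjTranspose_same R
    rw [hRH] at hS
    exact hS.posDef_iff_det_ne_zero.mpr (hdet ▸ mul_ne_zero hA.det_pos.ne' hB.det_pos.ne')
  have htrace : (R * A * R).trace = (A * B).trace := by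
    rw [trace_mul_cycle, hRR, trace_mul_comm]
  have hlog : Real.log (RCLike.re A.det) + Real.log (RCLike.re B.det) =
      Real.log (RCLike.re (R * A * R).det) := by
    conv_rhs => rw [hdet, ← hA.ofReal_re_det, ← hB.ofReal_re_det, ← RCLike.ofReal_mul,
      RCLike.ofReal_re]
    exact (Real.log_mul hA.re_det_pos_s11.ne' hB.re_det_pos_s11.ne').symm
  rw [hlog, ← htrace]
  exact hS.log_det_add_card_le_re_trace

end Matrix.PosDef

theorem stmt_11_general {d : ℕ}
    (Q F : Matrix (Fin d) (Fin d) ℂ)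
    (hQ : Q.PosDef) (hF : F.PosDef) :
    -((Q * F).trace.re) + Real.log Q.det.re + d ≤ Real.log (F⁻¹).det.re := by
  have key := hQ.log_det_add_log_det_add_card_le_re_trace_mul hF
  have hinv := hF.re_det_inv
  simp only [RCLike.re_to_complex, Fintype.card_fin] at key hinv
  rw [hinv, Real.log_inv]
  linarith

theorem stmt_11 {d : ℕ} (hd : 1 ≤ d)
    (Q F : Matrix (Fin d) (Fin d) ℂ)
    (hQ : Q.PosDef) (hF : F.PosDef)
    (hFI : (1 - F).PosSemidef) :
    -((Q * F).trace.re) + Real.log Q.det.re + d ≤ Real.log (F⁻¹).det.re :=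
  stmt_11_general Q F hQ hF
end

section
/- The log-det rate expression equals the negative log-determinant of the MMSE matrix: log det(I + Uᴴ H V Vᴴ Hᴴ U (Uᴴ Σ U)⁻¹) evaluated at the MMSE receiver U equals log det((I + Vᴴ Hᴴ Σ⁻¹ H V)), i.e., log det of the inverse MMSE matrix. -/
open Matrix ComplexOrder

theorem stmt_15 {N M d : ℕ}
    (H : Matrix (Fin N) (Fin M) ℂ) (V : Matrix (Fin M) (Fin d) ℂ)
    (Sig : Matrix (Fin N) (Fin N) ℂ) (hSig : Sig.PosDef)
    (hrank : (H * V).rank = d)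
    (U : Matrix (Fin N) (Fin d) ℂ)
    (hU : Uᴴ = Vᴴ * Hᴴ * (H * V * Vᴴ * Hᴴ + Sig)⁻¹)
    (hUSU : IsUnit (Uᴴ * Sig * U).det) :
    Real.log (1 + Uᴴ * H * V * Vᴴ * Hᴴ * U * (Uᴴ * Sig * U)⁻¹).det.re =
      Real.log (1 + Vᴴ * Hᴴ * Sig⁻¹ * H * V).det.re := by
  obtain ⟨G, hG⟩ : ∃ G, G = H * V := ⟨_, rfl⟩
  obtain ⟨A, hA⟩ : ∃ A, A = Gᴴ * Sig⁻¹ * G := ⟨_, rfl⟩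
  obtain ⟨E, hE⟩ : ∃ E, E = (1 + A)⁻¹ := ⟨_, rfl⟩
  have hSinv : (Sig⁻¹).PosDef := hSig.inv
  have hSdet : IsUnit Sig.det := isUnit_iff_isUnit_det _ |>.1 hSig.isUnit
  have hApsd : A.PosSemidef := by
    rw [hA]; exact hSinv.posSemidef.conjTranspose_mul_mul_same G
  have h1A : (1 + A).PosDef := Matrix.PosDef.one.add_posSemidef hApsd
  have h1Adet : IsUnit (1 + A).det := isUnit_iff_isUnit_det _ |>.1 h1A.isUnit
  have hGGS : (G * Gᴴ + Sig).PosDef :=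
    Matrix.PosDef.posSemidef_add (posSemidef_self_mul_conjTranspose G) hSig
  have hGGSdet : IsUnit (G * Gᴴ + Sig).det := isUnit_iff_isUnit_det _ |>.1 hGGS.isUnit
  -- push-through identity
  have key : (1 + A) * Gᴴ = Gᴴ * Sig⁻¹ * (G * Gᴴ + Sig) := by
    rw [hA, Matrix.add_mul, Matrix.one_mul, Matrix.mul_add,
      Matrix.mul_assoc (Gᴴ * Sig⁻¹) G Gᴴ,
      Matrix.mul_assoc Gᴴ Sig⁻¹ Sig, Matrix.nonsing_inv_mul _ hSdet, Matrix.mul_one, add_comm]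
  have hU0 : Uᴴ = Gᴴ * (G * Gᴴ + Sig)⁻¹ := by
    rw [hU, hG, Matrix.conjTranspose_mul, Matrix.mul_assoc (H*V) Vᴴ Hᴴ,
      ← Matrix.conjTranspose_mul]
  have h2 : E * (Gᴴ * Sig⁻¹) * (G * Gᴴ + Sig) = Gᴴ := by
    rw [Matrix.mul_assoc E, ← key, ← Matrix.mul_assoc, hE,
      Matrix.nonsing_inv_mul _ h1Adet, Matrix.one_mul]
  have hUH : Uᴴ = E * (Gᴴ * Sig⁻¹) := by
    calc Uᴴ = E * (Gᴴ * Sig⁻¹) * (G * Gᴴ + Sig) * (G * Gᴴ + Sig)⁻¹ := by rw [h2, hU0]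
      _ = E * (Gᴴ * Sig⁻¹) * ((G * Gᴴ + Sig) * (G * Gᴴ + Sig)⁻¹) := by
          rw [Matrix.mul_assoc]
      _ = E * (Gᴴ * Sig⁻¹) := by
          rw [Matrix.mul_nonsing_inv _ hGGSdet, Matrix.mul_one]
  have hEH : Eᴴ = E := by rw [hE]; exact h1A.inv.isHermitian
  have hU' : U = Sig⁻¹ * G * E := by
    have := congrArg Matrix.conjTranspose hUH
    simpa [Matrix.conjTranspose_mul, hEH, hSinv.isHermitian.eq, Matrix.mul_assoc] using this
  have hUSU' : Uᴴ * Sig * U = E * A * E := by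
    rw [hUH, hU', hA]
    calc E * (Gᴴ * Sig⁻¹) * Sig * (Sig⁻¹ * G * E)
        = E * (Gᴴ * ((Sig⁻¹ * Sig) * Sig⁻¹) * G) * E := by
          simp only [Matrix.mul_assoc]
      _ = E * (Gᴴ * Sig⁻¹ * G) * E := by
          rw [Matrix.nonsing_inv_mul _ hSdet, Matrix.one_mul, Matrix.mul_assoc Gᴴ]
  have hEdet : IsUnit E.det := by rw [hE]; exact Matrix.isUnit_nonsing_inv_det _ h1Adet
  have hAdet : IsUnit A.det := by
    have h := hUSU
    rw [hUSU', Matrix.det_mul, Matrix.det_mul, IsUnit.mul_iff, IsUnit.mul_iff] at h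
    exact h.1.2
  have hswap : A * (1 + A) = (1 + A) * A := by
    rw [Matrix.mul_add, Matrix.add_mul, Matrix.mul_one, Matrix.one_mul]
  have c1 : E * (A * (1 + A)) * E = E * A := by
    simp only [Matrix.mul_assoc]
    rw [hE, Matrix.mul_nonsing_inv _ h1Adet, Matrix.mul_one]
  have c2 : E * ((1 + A) * A) * E = A * E := by
    rw [← Matrix.mul_assoc E (1+A) A, hE, Matrix.nonsing_inv_mul _ h1Adet, Matrix.one_mul]
  have hcomm : E * A = A * E := by rw [← c1, hswap, c2]
  have hmain : (1 : Matrix (Fin d) (Fin d) ℂ) + Uᴴ * H * V * Vᴴ * Hᴴ * U * (Uᴴ * Sig * U)⁻¹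
      = 1 + A := by
    have e1 : Uᴴ * H * V * Vᴴ * Hᴴ * U = (Uᴴ * G) * (Gᴴ * U) := by
      rw [hG, Matrix.conjTranspose_mul]
      simp only [Matrix.mul_assoc]
    have e2 : Uᴴ * G = E * A := by
      rw [hUH, hA, Matrix.mul_assoc E]
    have e3 : Gᴴ * U = A * E := by
      rw [hU', hA]
      simp only [Matrix.mul_assoc]
    have hUG : Uᴴ * H * V * Vᴴ * Hᴴ * U = E * A * (A * E) := by rw [e1, e2, e3]
    rw [hUG, hUSU', Matrix.mul_inv_rev, Matrix.mul_inv_rev]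
    have h3 : E * A * (A * E) * (E⁻¹ * ((E * A)⁻¹)) = A := by
      rw [Matrix.mul_inv_rev]
      calc E * A * (A * E) * (E⁻¹ * (A⁻¹ * E⁻¹))
          = E * A * (A * (E * E⁻¹) * A⁻¹) * E⁻¹ := by simp only [Matrix.mul_assoc]
        _ = E * A * E⁻¹ := by
            rw [Matrix.mul_nonsing_inv _ hEdet, Matrix.mul_one,
              Matrix.mul_nonsing_inv _ hAdet, Matrix.mul_one]
        _ = A * (E * E⁻¹) := by rw [hcomm, Matrix.mul_assoc]
        _ = A := by rw [Matrix.mul_nonsing_inv _ hEdet, Matrix.mul_one]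
    rw [← Matrix.mul_inv_rev, h3]
  rw [hmain, hA, hG, Matrix.conjTranspose_mul]
  simp only [Matrix.mul_assoc]
end

section
/- S-lemma-type LMI robustness (Lemma 5): for matrices P, Q, Hermitian A, and ρ ≥ 0, the semi-infinite condition A ⪰ Pᴴ X Q + Qᴴ Xᴴ P for all X with ‖X‖_F ≤ ρ holds if there exists ε ≥ 0 such that the block matrix [[A − ε Qᴴ Q, −ρ Pᴴ],[−ρ P, ε I]] is positive semidefinite. -/
open Matrix ComplexOrder

/-! Write `X = ρ Z` with `‖Z‖_F ≤ 1` and put `Y = Z Q`. Conjugating the LMI by the stacked matrix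
`[I; Y]` gives `A - ε QᴴQ - ρ (PᴴY + YᴴP) + ε YᴴY ⪰ 0`; adding `ε Qᴴ (I - ZᴴZ) Q ⪰ 0`
(Cauchy–Schwarz gives `ZᴴZ ⪯ ‖Z‖_F² I`) leaves `A - PᴴXQ - QᴴXᴴP`. -/

section
variable {ι p q : Type*} [Fintype ι] [Fintype p] [Fintype q]

lemma sum_norm_mulVec_sq_le (Z : Matrix p q ℂ) (v : q → ℂ) :
    ∑ i, ‖(Z *ᵥ v) i‖ ^ 2 ≤ (∑ i, ∑ j, ‖Z i j‖ ^ 2) * ∑ j, ‖v j‖ ^ 2 := by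
  rw [Finset.sum_mul]
  refine Finset.sum_le_sum fun i _ => ?_
  calc ‖(Z *ᵥ v) i‖ ^ 2 ≤ (∑ j, ‖Z i j‖ * ‖v j‖) ^ 2 := by
        gcongr
        simpa [mulVec, dotProduct] using norm_sum_le Finset.univ fun j => Z i j * v j
    _ ≤ (∑ j, ‖Z i j‖ ^ 2) * ∑ j, ‖v j‖ ^ 2 := Finset.sum_mul_sq_le_sq_mul_sq _ _ _

lemma star_dotProduct_self_eq (v : q → ℂ) : star v ⬝ᵥ v = ((∑ i, ‖v i‖ ^ 2 : ℝ) : ℂ) := by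
  simp [dotProduct, RCLike.conj_mul]

lemma posSemidef_one_sub_conjTranspose_mul_self [DecidableEq q] (Z : Matrix p q ℂ)
    (hZ : ∑ i, ∑ j, ‖Z i j‖ ^ 2 ≤ 1) : (1 - Zᴴ * Z).PosSemidef := by
  refine .of_dotProduct_mulVec_nonneg (isHermitian_one.sub (isHermitian_conjTranspose_mul_self Z))
    fun v => ?_
  have hv : 0 ≤ ∑ j, ‖v j‖ ^ 2 := by positivity
  have hZv : ∑ i, ‖(Z *ᵥ v) i‖ ^ 2 ≤ ∑ j, ‖v j‖ ^ 2 :=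
    (sum_norm_mulVec_sq_le Z v).trans (mul_le_of_le_one_left hv hZ)
  rw [sub_mulVec, one_mulVec, dotProduct_sub, ← mulVec_mulVec, dotProduct_mulVec,
    ← star_mulVec, star_dotProduct_self_eq, star_dotProduct_self_eq, sub_nonneg]
  exact_mod_cast hZv

lemma exists_smul_eq_of_sqrt_sum_norm_sq_le {X : Matrix p q ℂ} {ρ : ℝ}
    (hX : Real.sqrt (∑ i, ∑ j, ‖X i j‖ ^ 2) ≤ ρ) :
    ∃ Z : Matrix p q ℂ, ∑ i, ∑ j, ‖Z i j‖ ^ 2 ≤ 1 ∧ (ρ : ℂ) • Z = X := by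
  obtain ⟨hρ, hs⟩ := Real.sqrt_le_iff.mp hX
  rcases hρ.eq_or_lt with rfl | hρ_pos
  · refine ⟨0, by simp, ?_⟩
    have h0 : ∑ i, ∑ j, ‖X i j‖ ^ 2 = 0 := le_antisymm (by simpa using hs) (by positivity)
    ext i j
    have hi := (Finset.sum_eq_zero_iff_of_nonneg fun i _ => by positivity).mp h0 i
      (Finset.mem_univ _)
    have hij := (Finset.sum_eq_zero_iff_of_nonneg fun j _ => by positivity).mp hi j
      (Finset.mem_univ _)
    simp [show X i j = 0 by simpa using hij]
  · refine ⟨(ρ : ℂ)⁻¹ • X, ?_, smul_inv_smul₀ (by exact_mod_cast hρ_pos.ne') X⟩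
    simp only [Matrix.smul_apply, smul_eq_mul, norm_mul, mul_pow, ← Finset.mul_sum, norm_inv,
      Complex.norm_of_nonneg hρ, inv_pow]
    exact (inv_mul_le_one₀ (by positivity)).mpr hs

lemma posSemidef_sub_of_posSemidef_fromBlocks [DecidableEq ι] [DecidableEq p] {A : Matrix ι ι ℂ}
    {P Y : Matrix p ι ℂ} {Q : Matrix q ι ℂ} {ρ ε : ℝ} (hε : 0 ≤ ε)
    (hM : (fromBlocks (A - (ε : ℂ) • (Qᴴ * Q)) (-((ρ : ℂ) • Pᴴ))
      (-((ρ : ℂ) • P)) ((ε : ℂ) • (1 : Matrix p p ℂ))).PosSemidef)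
    (hY : (Qᴴ * Q - Yᴴ * Y).PosSemidef) :
    (A - (Pᴴ * ((ρ : ℂ) • Y) + ((ρ : ℂ) • Y)ᴴ * P)).PosSemidef := by
  have hεY := hY.smul (a := (ε : ℂ)) (by exact_mod_cast hε)
  convert (hM.conjTranspose_mul_mul_same (fromRows 1 Y)).add hεY using 1
  rw [conjTranspose_fromRows_eq_fromCols_conjTranspose, fromCols_mul_fromBlocks,
    fromCols_mul_fromRows]
  simp only [conjTranspose_one, conjTranspose_smul, Complex.star_def, Complex.conj_ofReal,
    Matrix.mul_neg, Matrix.neg_mul, Matrix.one_mul, Matrix.mul_one, Matrix.add_mul,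
    Matrix.mul_smul, Matrix.smul_mul]
  module
end

theorem stmt_16_general {n m : ℕ}
    (A : Matrix (Fin n) (Fin n) ℂ)
    (P Q : Matrix (Fin m) (Fin n) ℂ)
    (ρ : ℝ)
    (ε : ℝ) (hε : 0 ≤ ε)
    (hLMI : (Matrix.fromBlocks (A - (ε : ℂ) • (Qᴴ * Q)) (-((ρ : ℂ) • Pᴴ))
      (-((ρ : ℂ) • P)) ((ε : ℂ) • (1 : Matrix (Fin m) (Fin m) ℂ))).PosSemidef) :
    ∀ X : Matrix (Fin m) (Fin m) ℂ,
      Real.sqrt (∑ i, ∑ j, ‖X i j‖ ^ 2) ≤ ρ →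
      (A - (Pᴴ * X * Q + Qᴴ * Xᴴ * P)).PosSemidef := by
  intro X hX
  obtain ⟨Z, hZ, rfl⟩ := exists_smul_eq_of_sqrt_sum_norm_sq_le hX
  have hZQ : (Qᴴ * Q - (Z * Q)ᴴ * (Z * Q)).PosSemidef := by
    simpa [Matrix.mul_sub, Matrix.sub_mul, Matrix.mul_assoc] using
      (posSemidef_one_sub_conjTranspose_mul_self Z hZ).conjTranspose_mul_mul_same Q
  convert posSemidef_sub_of_posSemidef_fromBlocks hε hLMI hZQ using 3 <;>
    simp only [Matrix.smul_mul, Matrix.mul_smul, conjTranspose_smul, conjTranspose_mul,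
      Matrix.mul_assoc]

theorem stmt_16 {n m : ℕ}
    (A : Matrix (Fin n) (Fin n) ℂ) (hA : A.IsHermitian)
    (P Q : Matrix (Fin m) (Fin n) ℂ)
    (ρ : ℝ) (hρ : 0 ≤ ρ)
    (ε : ℝ) (hε : 0 ≤ ε)
    (hLMI : (Matrix.fromBlocks (A - (ε : ℂ) • (Qᴴ * Q)) (-((ρ : ℂ) • Pᴴ))
      (-((ρ : ℂ) • P)) ((ε : ℂ) • (1 : Matrix (Fin m) (Fin m) ℂ))).PosSemidef) :
    ∀ X : Matrix (Fin m) (Fin m) ℂ,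
      Real.sqrt (∑ i, ∑ j, ‖X i j‖ ^ 2) ≤ ρ →
      (A - (Pᴴ * X * Q + Qᴴ * Xᴴ * P)).PosSemidef :=
  stmt_16_general A P Q ρ ε hε hLMI
end
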